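/- arXiv:1105.1674 — 6 statements merged into one kernel-verified Lean document; each statement's English description precedes it below -/
import Mathlib

section
/- Let M be a loopfree matroid on ground set E, and let F_j ⊊ F_{j+1} be flats of M with rank(F_{j+1}) = rank(F_j) + 2. Then, writing V_F := -∑_{i∈F} e_i ∈ ℝ^E for any subset F ⊆ E, we have ∑_{F flat of M, F_j ⊊ F ⊊ F_{j+1}} V_F = V_{F_{j+1}} + (m - 1)·V_{F_j}, where m is the number of flats F of M with F_j ⊊ F ⊊ F_{j+1}. -/
/-!
Each `i ∈ F_{j+1} \ F_j` lies in exactly one flat strictly between `F_j` and `F_{j+1}`, namely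
`C = cl(F_j ∪ {i})`: it has rank `rk F_j + 1`, hence is strictly between, and every intermediate
flat through `i` contains `C` and has the same rank, so equals it. Thus the `i`-th coordinate of
the sum is minus the number of intermediate flats containing `i`: `m` if `i ∈ F_j`, `1` if
`i ∈ F_{j+1} \ F_j` and `0` otherwise, which matches the right-hand side.
-/

namespace Stmt1

open scoped Classical

/-- The rank of a set `X` in a matroid `M`. -/
noncomputable def mrank {α : Type*} (M : Matroid α) (X : Set α) : ℕ∞ :=
  ⨆ I ∈ {I : Set α | M.Indep I ∧ I ⊆ X}, I.encard

/-- The vector `V_F = -∑_{i ∈ F} e_i` in `ℝ^E`. -/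
noncomputable def VF {E : Type*} (F : Set E) : E → ℝ := fun i =>
  if i ∈ F then (-1 : ℝ) else 0

lemma mrank_eq_eRk {α : Type*} (M : Matroid α) (X : Set α) : mrank M X = M.eRk X := by
  refine le_antisymm (iSup₂_le fun I hI => hI.1.encard_le_eRk_of_subset hI.2) ?_
  obtain ⟨I, hI⟩ := M.exists_isBasis' X
  exact hI.encard_eq_eRk ▸ le_iSup₂_of_le I ⟨hI.indep, hI.subset⟩ le_rfl

lemma finsum_mem_VF_apply {E : Type*} {S : Set (Set E)} (hS : S.Finite) (i : E) :
    (∑ᶠ F ∈ S, VF F) i = -({F ∈ S | i ∈ F}.ncard : ℝ) := by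
  have hsep : {F ∈ S | i ∈ F} = ↑(hS.toFinset.filter (i ∈ ·)) := by ext; simp
  rw [finsum_mem_eq_finite_toFinset_sum _ hS, Finset.sum_apply, hsep, Set.ncard_coe_finset]
  simp [VF, Finset.sum_ite]

lemma finsum_mem_VF_of_existsUnique_mem {E : Type*} {S : Set (Set E)} (hS : S.Finite)
    {A B : Set E} (hAB : A ⊆ B) (hA : ∀ F ∈ S, A ⊆ F) (hB : ∀ F ∈ S, F ⊆ B)
    (hunique : ∀ i ∈ B \ A, ∃! F, F ∈ S ∧ i ∈ F) :
    ∑ᶠ F ∈ S, VF F = VF B + ((S.ncard : ℝ) - 1) • VF A := by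
  ext i
  rw [finsum_mem_VF_apply hS, Pi.add_apply, Pi.smul_apply, smul_eq_mul]
  by_cases hiA : i ∈ A
  · have hall : {F ∈ S | i ∈ F} = S := Set.sep_eq_self_iff_mem_true.2 fun F hF => hA F hF hiA
    simp only [VF, hall, hiA, hAB hiA, if_true]
    ring
  by_cases hiB : i ∈ B
  · obtain ⟨F, hF, hother⟩ := hunique i ⟨hiB, hiA⟩
    have hone : {F ∈ S | i ∈ F} = {F} := Set.eq_singleton_iff_unique_mem.2 ⟨hF, hother⟩
    simp [VF, hone, hiA, hiB]
  · have hnone : {F ∈ S | i ∈ F} = ∅ :=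
      Set.sep_eq_empty_iff_mem_false.2 fun F hF hiF => hiB (hB F hF hiF)
    simp [VF, hnone, hiA, hiB]

section IntermediateFlats

variable {α : Type*} {M : Matroid α} {F G : Set α} {i : α}

theorem _root_.Matroid.IsFlat.eRk_closure_insert (hF : M.IsFlat F) (hi : i ∈ M.E \ F) :
    M.eRk (M.closure (insert i F)) = M.eRk F + 1 := by
  rw [Matroid.eRk_closure_eq, Matroid.eRk_insert_eq_add_one (by rwa [hF.closure])]

variable [M.RankFinite]

theorem _root_.Matroid.IsFlat.eRk_lt_eRk_of_ssubset (hF : M.IsFlat F) (hG : M.IsFlat G)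
    (hFG : F ⊂ G) : M.eRk F < M.eRk G := by
  refine lt_of_not_ge fun hle => hFG.not_subset ?_
  have hcl := (Matroid.RankFinite.isRkFinite F).closure_eq_closure_of_subset_of_eRk_ge_eRk
    hFG.subset hle
  rw [hF.closure, hG.closure] at hcl
  exact hcl.symm.subset

theorem existsUnique_isFlat_between_mem (hF : M.IsFlat F) (hG : M.IsFlat G) (hFG : F ⊆ G)
    (hrk : M.eRk G = M.eRk F + 2) (hi : i ∈ G \ F) :
    ∃! H, H ∈ {H | M.IsFlat H ∧ F ⊂ H ∧ H ⊂ G} ∧ i ∈ H := by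
  have hfin : M.eRk F ≠ ⊤ := (Matroid.RankFinite.isRkFinite F).eRk_lt_top.ne
  have hiE : i ∈ M.E := hG.subset_ground hi.1
  set C := M.closure (insert i F)
  have hC : M.IsFlat C := M.isFlat_closure _
  have hrkC : M.eRk C = M.eRk F + 1 := hF.eRk_closure_insert ⟨hiE, hi.2⟩
  have hinsC : insert i F ⊆ C := M.subset_closure _ (Set.insert_subset hiE hF.subset_ground)
  have hiC : i ∈ C := hinsC (Set.mem_insert i F)
  have hFC : F ⊂ C := ⟨(Set.subset_insert i F).trans hinsC, fun hCF => hi.2 (hCF hiC)⟩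
  have hCG : C ⊂ G := by
    refine ⟨hG.closure ▸ M.closure_subset_closure (Set.insert_subset hi.1 hFG), fun hGC => ?_⟩
    have : M.eRk F + 2 ≤ M.eRk F + 1 := hrk ▸ hrkC ▸ M.eRk_mono hGC
    norm_num [WithTop.add_le_add_iff_left hfin] at this
  refine ⟨C, ⟨⟨hC, hFC, hCG⟩, hiC⟩, fun H ⟨⟨hH, hFH, hHG⟩, hiH⟩ => ?_⟩
  have hCH : C ⊆ H := hH.closure ▸ M.closure_subset_closure (Set.insert_subset hiH hFH.subset)
  refine (hCH.eq_of_not_ssubset fun hCH' => ?_).symm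
  have hlow := Order.add_one_le_of_lt (hC.eRk_lt_eRk_of_ssubset hH hCH')
  have hhigh := hH.eRk_lt_eRk_of_ssubset hG hHG
  rw [hrkC, add_assoc, one_add_one_eq_two, ← hrk] at hlow
  exact hlow.not_gt hhigh

end IntermediateFlats

theorem sum_intermediate_flats_general {E : Type*} [Fintype E] (M : Matroid E)
    (Fj Fj1 : Set E) (hFj : M.IsFlat Fj) (hFj1 : M.IsFlat Fj1) (hss : Fj ⊂ Fj1)
    (hrk : mrank M Fj1 = mrank M Fj + 2) :
    (∑ᶠ F ∈ {F : Set E | M.IsFlat F ∧ Fj ⊂ F ∧ F ⊂ Fj1}, VF F) =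
      VF Fj1 +
        (((Set.ncard {F : Set E | M.IsFlat F ∧ Fj ⊂ F ∧ F ⊂ Fj1} : ℝ)) - 1) • VF Fj := by
  rw [mrank_eq_eRk, mrank_eq_eRk] at hrk
  exact finsum_mem_VF_of_existsUnique_mem (Set.toFinite _) hss.subset
    (fun _ hF => hF.2.1.subset) (fun _ hF => hF.2.2.subset)
    fun _ hi => existsUnique_isFlat_between_mem hFj hFj1 hss.subset hrk hi

theorem sum_intermediate_flats {E : Type*} [Fintype E] (M : Matroid E)
    (hE : M.E = Set.univ) (hloopfree : ∀ e : E, M.Indep {e})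
    (Fj Fj1 : Set E) (hFj : M.IsFlat Fj) (hFj1 : M.IsFlat Fj1) (hss : Fj ⊂ Fj1)
    (hrk : mrank M Fj1 = mrank M Fj + 2) :
    (∑ᶠ F ∈ {F : Set E | M.IsFlat F ∧ Fj ⊂ F ∧ F ⊂ Fj1}, VF F) =
      VF Fj1 +
        (((Set.ncard {F : Set E | M.IsFlat F ∧ Fj ⊂ F ∧ F ⊂ Fj1} : ℝ)) - 1) • VF Fj :=
  sum_intermediate_flats_general M Fj Fj1 hFj hFj1 hss hrk

end Stmt1
end

section
/- Let n ≥ 3. In the vector space Q_n = ℝ^{C(n,2)}/Im(φ_n), where φ_n : ℝ^n → ℝ^{C(n,2)} maps x to (x_i + x_j)_{i<j}, for each k ∈ [n] define v_I for a 2-element set I ⊆ [n] as the image of the indicator-distance vector of the tree with one bounded edge separating I from its complement. Then for every fixed k, the family V_k = {v_I : k ∉ I, |I| = 2} satisfies ∑_{w ∈ V_k} w = 0 in Q_n, and removing any single element v_{I_0} from V_k yields a basis of Q_n. -/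
/-!
STATEMENT 4: Let n ≥ 3.  In the vector space Q_n = ℝ^{C(n,2)}/Im(φ_n), where
φ_n : ℝ^n → ℝ^{C(n,2)} maps x to (x_i + x_j)_{i<j}, for each k ∈ [n] define v_I for a
2-element set I ⊆ [n] as the image of the indicator-distance vector of the tree with one
bounded edge separating I from its complement.  Then for every fixed k, the family
V_k = {v_I : k ∉ I, |I| = 2} satisfies ∑_{w ∈ V_k} w = 0 in Q_n, and removing any single
element v_{I_0} from V_k yields a basis of Q_n.
-/

namespace Stmt4

open scoped Classical

/-- Index type for the coordinates of `ℝ^{C(n,2)}`: ordered pairs i < j in [n]. -/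
def Pair (n : ℕ) := {p : Fin n × Fin n // p.1 < p.2}

/-- The map φ_n : ℝ^n → ℝ^{C(n,2)}, x ↦ (x_i + x_j)_{i<j}. -/
def phiMap (n : ℕ) (x : Fin n → ℝ) : Pair n → ℝ := fun p => x p.val.1 + x p.val.2

/-- The subspace Im(φ_n) of ℝ^{C(n,2)}. -/
noncomputable def phiIm (n : ℕ) : Submodule ℝ (Pair n → ℝ) :=
  Submodule.span ℝ (Set.range (phiMap n))

/-- The indicator-distance vector of the tree with one bounded edge (of length 1)
separating I from its complement: entry 1 at {i,j} if exactly one of i, j lies in I,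
and 0 otherwise. -/
noncomputable def splitVec {n : ℕ} (I : Finset (Fin n)) : Pair n → ℝ := fun p =>
  if ((p.val.1 ∈ I) ↔ (p.val.2 ∈ I)) then 0 else 1

/-- The class v_I of the split vector of I in Q_n = ℝ^{C(n,2)}/Im(φ_n). -/
noncomputable def v {n : ℕ} (I : Finset (Fin n)) : (Pair n → ℝ) ⧸ phiIm n :=
  Submodule.Quotient.mk (splitVec I)

/-!
Write `e_I` for the standard basis vector of `ℝ^{C(n,2)}` at the 2-set `I`. The split vector
of a 2-set is `d_I = φ(𝟙_I) - 2 e_I`, so `v_I = -2 [e_I]` in `Q_n`, and the question is about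
the classes `[e_I]`. Summing `e_I` over the 2-sets avoiding `k` gives `φ(x)` with
`x = 1/2 - δ_k`, which is the relation; together with `φ(δ_i) = ∑_{I ∋ i} e_I` it writes every
`[e_J]` in terms of the `[e_I]` with `k ∉ I ≠ I₀`. For independence, if `∑ c_I e_I = φ(x)` with
the `c_I` supported on those `I`, then `x_i + x_k = 0` for all `i ≠ k` and `x_a + x_b = 0` for
`I₀ = {a, b}`; the odd cycle `k a b` forces `x = 0`, hence `c = 0`.
-/

section

lemma eq_pair_of_card_eq_two {α : Type*} [DecidableEq α] {I : Finset α} {i j : α}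
    (hI : I.card = 2) (hi : i ∈ I) (hj : j ∈ I) (hij : i ≠ j) : I = {i, j} :=
  (Finset.eq_of_subset_of_card_le (Finset.insert_subset hi (Finset.singleton_subset_iff.2 hj))
    (by rw [hI, Finset.card_pair hij])).symm

lemma eq_zero_of_add_eq_zero {ι : Type*} {x : ι → ℝ} {k a b : ι} (ha : a ≠ k) (hb : b ≠ k)
    (hstar : ∀ i ≠ k, x i + x k = 0) (hab : x a + x b = 0) : x = 0 := by
  have hk : x k = 0 := by linarith [hstar a ha, hstar b hb]
  funext i
  by_cases hi : i = k
  · rw [hi, hk, Pi.zero_apply]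
  · rw [Pi.zero_apply]
    linarith [hstar i hi]

variable {n : ℕ}

instance : Fintype (Pair n) := inferInstanceAs (Fintype {p : Fin n × Fin n // p.1 < p.2})

lemma mem_phiIm_iff {y : Pair n → ℝ} : y ∈ phiIm n ↔ ∃ x, phiMap n x = y := by
  let φ : (Fin n → ℝ) →ₗ[ℝ] (Pair n → ℝ) :=
    LinearMap.pi fun p =>
      LinearMap.proj (R := ℝ) (φ := fun _ => ℝ) p.val.1 + LinearMap.proj p.val.2
  have : phiIm n = LinearMap.range φ := Submodule.span_eq (LinearMap.range φ)
  rw [this, LinearMap.mem_range]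
  rfl

lemma mkQ_phiMap (x : Fin n → ℝ) : (phiIm n).mkQ (phiMap n x) = 0 :=
  (Submodule.Quotient.mk_eq_zero _).2 (Submodule.subset_span ⟨x, rfl⟩)

def pairOf (p : Pair n) : Finset (Fin n) := {p.val.1, p.val.2}

lemma pairOf_injective : Function.Injective (pairOf (n := n)) := by
  rintro ⟨⟨a, b⟩, hab⟩ ⟨⟨c, d⟩, hcd⟩ h
  have h' := congrArg (fun s : Finset (Fin n) => (s : Set (Fin n))) h
  simp only [pairOf, Finset.coe_pair, Set.pair_eq_pair_iff] at h'
  rcases h' with ⟨rfl, rfl⟩ | ⟨rfl, rfl⟩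
  · rfl
  · exact absurd (hab.trans hcd) (lt_irrefl _)

lemma mem_pairOf {i : Fin n} {p : Pair n} : i ∈ pairOf p ↔ p.val.1 = i ∨ p.val.2 = i := by
  simp [pairOf, eq_comm]

lemma card_pairOf (p : Pair n) : (pairOf p).card = 2 := Finset.card_pair p.2.ne

lemma phiMap_apply (x : Fin n → ℝ) (p : Pair n) : phiMap n x p = ∑ i ∈ pairOf p, x i :=
  (Finset.sum_pair p.2.ne).symm

lemma exists_pairOf_eq {a b : Fin n} (hab : a ≠ b) : ∃ p : Pair n, pairOf p = {a, b} := by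
  rcases hab.lt_or_gt with h | h
  · exact ⟨⟨(a, b), h⟩, rfl⟩
  · exact ⟨⟨(b, a), h⟩, Finset.pair_comm _ _⟩

lemma exists_pairOf_eq_of_card_eq_two {I : Finset (Fin n)} (hI : I.card = 2) :
    ∃ p : Pair n, pairOf p = I := by
  obtain ⟨a, b, hab, rfl⟩ := Finset.card_eq_two.mp hI
  exact exists_pairOf_eq hab

lemma pairOf_eq_iff {p : Pair n} {I : Finset (Fin n)} (hI : I.card = 2) :
    pairOf p = I ↔ p.val.1 ∈ I ∧ p.val.2 ∈ I := by
  constructor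
  · rintro rfl
    simp [pairOf]
  · rintro ⟨h₁, h₂⟩
    refine Finset.eq_of_subset_of_card_le ?_ (by rw [hI, card_pairOf])
    simp [pairOf, Finset.insert_subset_iff, h₁, h₂]

noncomputable def edgeVec (I : Finset (Fin n)) : Pair n → ℝ :=
  fun p => if pairOf p = I then 1 else 0

lemma sum_edgeVec_apply (s : Finset (Finset (Fin n))) (p : Pair n) :
    (∑ I ∈ s, edgeVec I) p = if pairOf p ∈ s then 1 else 0 := by
  simp [Finset.sum_apply, edgeVec]

lemma sum_smul_edgeVec_pairOf (z : Pair n → ℝ) : ∑ p, z p • edgeVec (pairOf p) = z := by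
  funext q
  simp [Finset.sum_apply, edgeVec, pairOf_injective.eq_iff]

lemma splitVec_eq {I : Finset (Fin n)} (hI : I.card = 2) :
    splitVec I = phiMap n (fun i => if i ∈ I then 1 else 0) - (2 : ℝ) • edgeVec I := by
  funext p
  simp only [splitVec, phiMap, edgeVec, pairOf_eq_iff hI, Pi.sub_apply, Pi.smul_apply]
  by_cases h₁ : p.val.1 ∈ I <;> by_cases h₂ : p.val.2 ∈ I <;> norm_num [h₁, h₂]

lemma v_eq_neg_two_smul {I : Finset (Fin n)} (hI : I.card = 2) :
    v I = (-2 : ℝ) • (phiIm n).mkQ (edgeVec I) := by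
  rw [v, ← Submodule.mkQ_apply, splitVec_eq hI, map_sub, map_smul, mkQ_phiMap, zero_sub,
    neg_smul]

noncomputable def avoiding (k : Fin n) : Finset (Finset (Fin n)) :=
  (Finset.powersetCard 2 Finset.univ).filter (fun I => k ∉ I)

noncomputable def incident (i : Fin n) : Finset (Finset (Fin n)) :=
  (Finset.powersetCard 2 Finset.univ).filter (fun I => i ∈ I)

lemma mem_avoiding {k : Fin n} {I : Finset (Fin n)} : I ∈ avoiding k ↔ I.card = 2 ∧ k ∉ I := by
  simp [avoiding]

lemma mem_incident {i : Fin n} {I : Finset (Fin n)} : I ∈ incident i ↔ I.card = 2 ∧ i ∈ I := by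
  simp [incident]

lemma sum_edgeVec_avoiding (k : Fin n) :
    ∑ I ∈ avoiding k, edgeVec I = phiMap n (fun i => if i = k then -1 / 2 else 1 / 2) := by
  funext p
  rw [sum_edgeVec_apply]
  simp only [mem_avoiding, card_pairOf, true_and, mem_pairOf, phiMap]
  obtain ⟨⟨a, b⟩, hab : a < b⟩ := p
  split_ifs <;> grind

lemma sum_edgeVec_incident (i : Fin n) :
    ∑ I ∈ incident i, edgeVec I = phiMap n (Pi.single i 1) := by
  funext p
  rw [sum_edgeVec_apply]
  simp only [mem_incident, card_pairOf, true_and, mem_pairOf, phiMap, Pi.single_apply]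
  obtain ⟨⟨a, b⟩, hab : a < b⟩ := p
  split_ifs <;> grind

lemma sum_smul_edgeVec_apply {P : Finset (Fin n) → Prop} [Fintype {I // P I}]
    (g : {I // P I} → ℝ) (p : Pair n) :
    (∑ I, g I • edgeVec I.val) p = if h : P (pairOf p) then g ⟨pairOf p, h⟩ else 0 := by
  simp only [Finset.sum_apply, Pi.smul_apply, edgeVec, smul_eq_mul, mul_ite, mul_one, mul_zero]
  split_ifs with h
  · rw [Fintype.sum_eq_single ⟨pairOf p, h⟩ fun I hI => if_neg fun e => hI (Subtype.ext e.symm)]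
    simp
  · exact Finset.sum_eq_zero fun I _ => if_neg fun e : pairOf p = I.val => h (e ▸ I.2)

section
variable {k : Fin n} {I₀ : Finset (Fin n)}

theorem linearIndependent_v_avoiding_ne (hI₀ : I₀ ∈ avoiding k) :
    LinearIndependent ℝ (fun I : {I // I ∈ avoiding k ∧ I ≠ I₀} => v I.val) := by
  rw [Fintype.linearIndependent_iff]
  intro g hg J
  set c := ∑ I, g I • edgeVec I.val with hc
  have hc_mem : c ∈ phiIm n := by
    have : (-2 : ℝ) • (phiIm n).mkQ c = 0 := by
      rw [← hg, hc, map_sum, Finset.smul_sum]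
      refine Finset.sum_congr rfl fun I _ => ?_
      rw [map_smul, smul_comm, v_eq_neg_two_smul (mem_avoiding.1 I.2.1).1]
    rw [smul_eq_zero, Submodule.mkQ_apply, Submodule.Quotient.mk_eq_zero] at this
    exact this.resolve_left (by norm_num)
  obtain ⟨x, hx⟩ := mem_phiIm_iff.1 hc_mem
  have hx_edge : ∀ {a b}, a ≠ b → ¬({a, b} ∈ avoiding k ∧ {a, b} ≠ I₀) → x a + x b = 0 := by
    intro a b hab hout
    obtain ⟨p, hp⟩ := exists_pairOf_eq hab
    rw [← Finset.sum_pair hab, ← hp, ← phiMap_apply, hx, hc, sum_smul_edgeVec_apply, hp,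
      dif_neg hout]
  obtain ⟨a, b, hab, rfl⟩ := Finset.card_eq_two.1 (mem_avoiding.1 hI₀).1
  have hk : k ≠ a ∧ k ≠ b := by simpa using (mem_avoiding.1 hI₀).2
  have hx0 : x = 0 := eq_zero_of_add_eq_zero hk.1.symm hk.2.symm
    (fun i hik => hx_edge hik (by simp [mem_avoiding])) (hx_edge hab (by simp))
  obtain ⟨p, hp⟩ := exists_pairOf_eq_of_card_eq_two (mem_avoiding.1 J.2.1).1
  calc g J = c p := by rw [hc, sum_smul_edgeVec_apply, dif_pos (hp ▸ J.2)]; simp [hp]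
    _ = 0 := by rw [← hx, hx0]; simp [phiMap]

lemma mkQ_edgeVec_mem_span_of_mem_avoiding (hI₀ : I₀ ∈ avoiding k) {J : Finset (Fin n)}
    (hJ : J ∈ avoiding k) :
    (phiIm n).mkQ (edgeVec J) ∈
      Submodule.span ℝ (Set.range fun I : {I // I ∈ avoiding k ∧ I ≠ I₀} => v I.val) := by
  set S := Submodule.span ℝ (Set.range fun I : {I // I ∈ avoiding k ∧ I ≠ I₀} => v I.val)
  have h_ne : ∀ J ∈ avoiding k, J ≠ I₀ → (phiIm n).mkQ (edgeVec J) ∈ S := by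
    intro J hJ hne
    have : (phiIm n).mkQ (edgeVec J) = (-1 / 2 : ℝ) • v J := by
      rw [v_eq_neg_two_smul (mem_avoiding.1 hJ).1, smul_smul]
      norm_num
    rw [this]
    exact S.smul_mem _ (Submodule.subset_span ⟨⟨J, hJ, hne⟩, rfl⟩)
  obtain rfl | hne := eq_or_ne J I₀
  · have : edgeVec J = phiMap n (fun i => if i = k then -1 / 2 else 1 / 2)
        - ∑ I ∈ (avoiding k).erase J, edgeVec I := by
      rw [← sum_edgeVec_avoiding, ← Finset.add_sum_erase _ _ hJ, add_sub_cancel_right]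
    rw [this, map_sub, mkQ_phiMap, zero_sub, map_sum]
    exact S.neg_mem (S.sum_mem fun I hI =>
      h_ne I (Finset.mem_of_mem_erase hI) (Finset.ne_of_mem_erase hI))
  · exact h_ne J hJ hne

lemma mkQ_edgeVec_mem_span (hI₀ : I₀ ∈ avoiding k) {J : Finset (Fin n)} (hJ : J.card = 2) :
    (phiIm n).mkQ (edgeVec J) ∈
      Submodule.span ℝ (Set.range fun I : {I // I ∈ avoiding k ∧ I ≠ I₀} => v I.val) := by
  by_cases hkJ : k ∈ J
  swap
  · exact mkQ_edgeVec_mem_span_of_mem_avoiding hI₀ (mem_avoiding.2 ⟨hJ, hkJ⟩)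
  obtain ⟨i, hiJ, hik⟩ := Finset.exists_mem_ne (by omega : 1 < J.card) k
  have hJ_eq := eq_pair_of_card_eq_two hJ hiJ hkJ hik
  have hJi : J ∈ incident i := mem_incident.2 ⟨hJ, hiJ⟩
  have : edgeVec J = phiMap n (Pi.single i 1) - ∑ I ∈ (incident i).erase J, edgeVec I := by
    rw [← sum_edgeVec_incident, ← Finset.add_sum_erase _ _ hJi, add_sub_cancel_right]
  rw [this, map_sub, mkQ_phiMap, zero_sub, map_sum]
  refine Submodule.neg_mem _ (Submodule.sum_mem _ fun I hI => ?_)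
  obtain ⟨hIJ, hIi⟩ := Finset.mem_erase.1 hI
  obtain ⟨hI2, hiI⟩ := mem_incident.1 hIi
  refine mkQ_edgeVec_mem_span_of_mem_avoiding hI₀ (mem_avoiding.2 ⟨hI2, fun hkI => hIJ ?_⟩)
  rw [hJ_eq, eq_pair_of_card_eq_two hI2 hiI hkI hik]

theorem span_v_avoiding_ne_eq_top (hI₀ : I₀ ∈ avoiding k) :
    Submodule.span ℝ (Set.range fun I : {I // I ∈ avoiding k ∧ I ≠ I₀} => v I.val) = ⊤ := by
  refine Submodule.eq_top_iff'.2 fun y => ?_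
  obtain ⟨z, rfl⟩ := (phiIm n).mkQ_surjective y
  rw [← sum_smul_edgeVec_pairOf z, map_sum]
  exact Submodule.sum_mem _ fun p _ => by
    rw [map_smul]
    exact Submodule.smul_mem _ _ (mkQ_edgeVec_mem_span hI₀ (card_pairOf p))

theorem sum_v_avoiding (k : Fin n) : ∑ I ∈ avoiding k, v I = 0 := by
  rw [Finset.sum_congr rfl fun I hI => v_eq_neg_two_smul (mem_avoiding.1 hI).1,
    ← Finset.smul_sum, ← map_sum, sum_edgeVec_avoiding, mkQ_phiMap, smul_zero]

end

end

theorem sum_Vk_eq_zero_and_basis_general (n : ℕ) (k : Fin n) :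
    (∑ I ∈ (Finset.powersetCard 2 Finset.univ).filter (fun I => k ∉ I), v I) = 0 ∧
    ∀ I₀ ∈ (Finset.powersetCard 2 Finset.univ).filter (fun I => k ∉ I),
      LinearIndependent ℝ
        (fun I : {I : Finset (Fin n) //
            I ∈ (Finset.powersetCard 2 Finset.univ).filter (fun I => k ∉ I) ∧ I ≠ I₀} =>
          v I.val) ∧
      Submodule.span ℝ
        (Set.range (fun I : {I : Finset (Fin n) //
            I ∈ (Finset.powersetCard 2 Finset.univ).filter (fun I => k ∉ I) ∧ I ≠ I₀} =>
          v I.val)) = ⊤ :=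
  ⟨sum_v_avoiding k, fun _ hI₀ =>
    ⟨linearIndependent_v_avoiding_ne hI₀, span_v_avoiding_ne_eq_top hI₀⟩⟩

theorem sum_Vk_eq_zero_and_basis (n : ℕ) (hn : 3 ≤ n) (k : Fin n) :
    (∑ I ∈ (Finset.powersetCard 2 Finset.univ).filter (fun I => k ∉ I), v I) = 0 ∧
    ∀ I₀ ∈ (Finset.powersetCard 2 Finset.univ).filter (fun I => k ∉ I),
      LinearIndependent ℝ
        (fun I : {I : Finset (Fin n) //
            I ∈ (Finset.powersetCard 2 Finset.univ).filter (fun I => k ∉ I) ∧ I ≠ I₀} =>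
          v I.val) ∧
      Submodule.span ℝ
        (Set.range (fun I : {I : Finset (Fin n) //
            I ∈ (Finset.powersetCard 2 Finset.univ).filter (fun I => k ∉ I) ∧ I ≠ I₀} =>
          v I.val)) = ⊤ :=
  sum_Vk_eq_zero_and_basis_general n k

end Stmt4
end

section
/- Let n ≥ 3, k ∈ [n], and I ⊆ [n] with 1 < |I| < n−1 and k ∉ I. Then in Q_n = ℝ^{C(n,2)}/Im(φ_n) we have v_I = ∑_{S ⊆ I, |S| = 2} v_S. -/
/-!
STATEMENT 5: Let n ≥ 3, k ∈ [n], and I ⊆ [n] with 1 < |I| < n−1 and k ∉ I.  Then in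
Q_n = ℝ^{C(n,2)}/Im(φ_n) we have v_I = ∑_{S ⊆ I, |S| = 2} v_S.
-/

namespace Stmt5


open scoped Classical

/-- Index type for the coordinates of `ℝ^{C(n,2)}`: ordered pairs i < j in [n]. -/
def Pair (n : ℕ) := {p : Fin n × Fin n // p.1 < p.2}

/-- The map φ_n : ℝ^n → ℝ^{C(n,2)}, x ↦ (x_i + x_j)_{i<j}. -/
def phiMap (n : ℕ) (x : Fin n → ℝ) : Pair n → ℝ := fun p => x p.val.1 + x p.val.2

/-- The subspace Im(φ_n) of ℝ^{C(n,2)}. -/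
noncomputable def phiIm (n : ℕ) : Submodule ℝ (Pair n → ℝ) :=
  Submodule.span ℝ (Set.range (phiMap n))

/-- The indicator-distance vector of the tree with one bounded edge (of length 1)
separating I from its complement: entry 1 at {i,j} if exactly one of i, j lies in I,
and 0 otherwise. -/
noncomputable def splitVec {n : ℕ} (I : Finset (Fin n)) : Pair n → ℝ := fun p =>
  if ((p.val.1 ∈ I) ↔ (p.val.2 ∈ I)) then 0 else 1

/-- The class v_I of the split vector of I in Q_n = ℝ^{C(n,2)}/Im(φ_n). -/
noncomputable def v {n : ℕ} (I : Finset (Fin n)) : (Pair n → ℝ) ⧸ phiIm n :=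
  Submodule.Quotient.mk (splitVec I)

lemma card_filter_mem {n : ℕ} (I : Finset (Fin n)) (i : Fin n) :
    ((Finset.powersetCard 2 I).filter (fun S => i ∈ S)).card
      = if i ∈ I then I.card - 1 else 0 := by
  split_ifs with hi
  · have hb : ((Finset.powersetCard 2 I).filter (fun S => i ∈ S)).card
        = (Finset.powersetCard 1 (I.erase i)).card := by
      apply Finset.card_bij' (fun S _ => S.erase i) (fun t _ => insert i t)
      · intro S hS
        simp only [Finset.mem_filter] at hS
        exact Finset.insert_erase hS.2
      · intro t ht
        rw [Finset.mem_powersetCard] at ht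
        have hit : i ∉ t := fun h => (Finset.mem_erase.mp (ht.1 h)).1 rfl
        exact Finset.erase_insert hit
      · intro S hS
        simp only [Finset.mem_filter, Finset.mem_powersetCard] at hS
        rw [Finset.mem_powersetCard]
        constructor
        · exact Finset.erase_subset_erase _ hS.1.1
        · rw [Finset.card_erase_of_mem hS.2, hS.1.2]
      · intro t ht
        rw [Finset.mem_powersetCard] at ht
        have hit : i ∉ t := fun h => (Finset.mem_erase.mp (ht.1 h)).1 rfl
        simp only [Finset.mem_filter, Finset.mem_powersetCard]
        refine ⟨⟨?_, ?_⟩, Finset.mem_insert_self _ _⟩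
        · intro a ha
          rcases Finset.mem_insert.mp ha with rfl | ha
          · exact hi
          · exact Finset.mem_of_mem_erase (ht.1 ha)
        · rw [Finset.card_insert_of_notMem hit, ht.2]
    rw [hb, Finset.card_powersetCard, Finset.card_erase_of_mem hi, Nat.choose_one_right]
  · rw [Finset.filter_eq_empty_iff.mpr, Finset.card_empty]
    intro S hS
    rw [Finset.mem_powersetCard] at hS
    exact fun hiS => hi (hS.1 hiS)

lemma filter_pair {n : ℕ} (I : Finset (Fin n)) (i j : Fin n) (hij : i ≠ j) :
    ((Finset.powersetCard 2 I).filter (fun S => i ∈ S ∧ j ∈ S)).card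
      = if i ∈ I ∧ j ∈ I then 1 else 0 := by
  split_ifs with h
  · have : (Finset.powersetCard 2 I).filter (fun S => i ∈ S ∧ j ∈ S)
        = {({i, j} : Finset (Fin n))} := by
      ext S
      simp only [Finset.mem_filter, Finset.mem_powersetCard, Finset.mem_singleton]
      constructor
      · rintro ⟨⟨hSI, hcard⟩, hiS, hjS⟩
        refine (Finset.eq_of_subset_of_card_le ?_ ?_).symm
        · intro a ha
          rcases Finset.mem_insert.mp ha with rfl | ha
          · exact hiS
          · rw [Finset.mem_singleton] at ha; exact ha ▸ hjS
        · rw [hcard, Finset.card_insert_of_notMem (by simpa using hij),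
            Finset.card_singleton]
      · rintro rfl
        refine ⟨⟨?_, ?_⟩, Finset.mem_insert_self _ _, by simp⟩
        · intro a ha
          rcases Finset.mem_insert.mp ha with rfl | ha
          · exact h.1
          · rw [Finset.mem_singleton] at ha; exact ha ▸ h.2
        · rw [Finset.card_insert_of_notMem (by simpa using hij), Finset.card_singleton]
    rw [this, Finset.card_singleton]
  · rw [Finset.filter_eq_empty_iff.mpr, Finset.card_empty]
    intro S hS
    rw [Finset.mem_powersetCard] at hS
    rintro ⟨hiS, hjS⟩
    exact h ⟨hS.1 hiS, hS.1 hjS⟩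

lemma sum_splitVec {n : ℕ} (I : Finset (Fin n)) (p : Pair n) :
    ∑ S ∈ Finset.powersetCard 2 I, splitVec S p
      = (if p.val.1 ∈ I then (I.card : ℝ) - 1 else 0)
        + (if p.val.2 ∈ I then (I.card : ℝ) - 1 else 0)
        - 2 * (if p.val.1 ∈ I ∧ p.val.2 ∈ I then 1 else 0) := by
  have hij : p.val.1 ≠ p.val.2 := ne_of_lt p.prop
  have hrw : ∀ S ∈ Finset.powersetCard 2 I, splitVec S p
      = (if p.val.1 ∈ S then (1 : ℝ) else 0) + (if p.val.2 ∈ S then 1 else 0)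
        - 2 * (if p.val.1 ∈ S ∧ p.val.2 ∈ S then 1 else 0) := by
    intro S _
    by_cases h1 : p.val.1 ∈ S <;> by_cases h2 : p.val.2 ∈ S <;>
      simp [splitVec, h1, h2] <;> norm_num
  rw [Finset.sum_congr rfl hrw]
  rw [Finset.sum_sub_distrib, Finset.sum_add_distrib, ← Finset.mul_sum]
  rw [Finset.sum_boole, Finset.sum_boole, Finset.sum_boole]
  rw [card_filter_mem, card_filter_mem, filter_pair I _ _ hij]
  congr 1
  congr 1
  · split_ifs with h
    · rw [Nat.cast_sub (Finset.one_le_card.mpr ⟨_, h⟩), Nat.cast_one]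
    · simp
  · split_ifs with h
    · rw [Nat.cast_sub (Finset.one_le_card.mpr ⟨_, h⟩), Nat.cast_one]
    · simp
  · split_ifs <;> simp

theorem v_eq_sum_two_subsets (n : ℕ) (hn : 3 ≤ n) (k : Fin n) (I : Finset (Fin n))
    (hI1 : 1 < I.card) (hI2 : I.card < n - 1) (hk : k ∉ I) :
    v I = ∑ S ∈ Finset.powersetCard 2 I, v S := by
  have hsum : ∑ S ∈ Finset.powersetCard 2 I, v S
      = Submodule.Quotient.mk (∑ S ∈ Finset.powersetCard 2 I, splitVec S) := by
    simp only [v, ← Submodule.mkQ_apply, map_sum]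
  rw [hsum]
  unfold v
  rw [Submodule.Quotient.eq]
  have key : splitVec I - ∑ S ∈ Finset.powersetCard 2 I, splitVec S
      = phiMap n (fun a => if a ∈ I then (2 - (I.card : ℝ)) else 0) := by
    funext p
    have hs := sum_splitVec I p
    simp only [Pi.sub_apply, Finset.sum_apply]
    rw [hs]
    by_cases h1 : p.val.1 ∈ I <;> by_cases h2 : p.val.2 ∈ I <;>
      simp [splitVec, phiMap, h1, h2] <;> ring
  rw [key]
  exact Submodule.subset_span ⟨_, rfl⟩

end Stmt5
end

section
/- Let n ≥ 3, k ∈ [n], I_0 a 2-element subset of [n] with k ∉ I_0, and I ⊆ [n] with 1 < |I| < n−1 and k ∉ I. Set V_k^{I_0} = {v_S : k ∉ S, |S| = 2, S ≠ I_0}. Then v_I = ∑_{S ⊆ I, v_S ∈ V_k^{I_0}} v_S if I_0 ⊄ I, and v_I = −∑_{S ⊄ I, v_S ∈ V_k^{I_0}} v_S if I_0 ⊆ I. -/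
/-!
STATEMENT 6: Let n ≥ 3, k ∈ [n], I₀ a 2-element subset of [n] with k ∉ I₀, and I ⊆ [n]
with 1 < |I| < n−1 and k ∉ I.  Set V_k^{I₀} = {v_S : k ∉ S, |S| = 2, S ≠ I₀}.  Then
v_I = ∑_{S ⊆ I, v_S ∈ V_k^{I₀}} v_S if I₀ ⊄ I, and
v_I = −∑_{S ⊄ I, v_S ∈ V_k^{I₀}} v_S if I₀ ⊆ I.
-/

namespace Stmt6

open scoped Classical

/-- Index type for the coordinates of `ℝ^{C(n,2)}`: ordered pairs i < j in [n]. -/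
def Pair (n : ℕ) := {p : Fin n × Fin n // p.1 < p.2}

/-- The map φ_n : ℝ^n → ℝ^{C(n,2)}, x ↦ (x_i + x_j)_{i<j}. -/
def phiMap (n : ℕ) (x : Fin n → ℝ) : Pair n → ℝ := fun p => x p.val.1 + x p.val.2

/-- The subspace Im(φ_n) of ℝ^{C(n,2)}. -/
noncomputable def phiIm (n : ℕ) : Submodule ℝ (Pair n → ℝ) :=
  Submodule.span ℝ (Set.range (phiMap n))

/-- The indicator-distance vector of the tree with one bounded edge (of length 1)
separating I from its complement: entry 1 at {i,j} if exactly one of i, j lies in I,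
and 0 otherwise. -/
noncomputable def splitVec {n : ℕ} (I : Finset (Fin n)) : Pair n → ℝ := fun p =>
  if ((p.val.1 ∈ I) ↔ (p.val.2 ∈ I)) then 0 else 1

/-- The class v_I of the split vector of I in Q_n = ℝ^{C(n,2)}/Im(φ_n). -/
noncomputable def v {n : ℕ} (I : Finset (Fin n)) : (Pair n → ℝ) ⧸ phiIm n :=
  Submodule.Quotient.mk (splitVec I)

/-- indicator function of a finset -/
noncomputable def chi {n : ℕ} (I : Finset (Fin n)) : Fin n → ℝ := fun x => if x ∈ I then 1 else 0

lemma splitVec_formula {n : ℕ} (I : Finset (Fin n)) (p : Pair n) :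
    splitVec I p = chi I p.val.1 + chi I p.val.2 - 2 * (chi I p.val.1 * chi I p.val.2) := by
  by_cases h1 : p.val.1 ∈ I <;> by_cases h2 : p.val.2 ∈ I <;>
    simp [splitVec, chi, h1, h2] <;> norm_num

lemma sum_chi_mul {n : ℕ} (I : Finset (Fin n)) {i j : Fin n} (hij : i ≠ j) :
    ∑ S ∈ Finset.powersetCard 2 I, chi S i * chi S j = chi I i * chi I j := by
  have h : ∀ S : Finset (Fin n), chi S i * chi S j = if i ∈ S ∧ j ∈ S then (1:ℝ) else 0 := by
    intro S; by_cases h1 : i ∈ S <;> by_cases h2 : j ∈ S <;> simp [chi, h1, h2]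
  simp_rw [h]
  rw [← Finset.sum_filter]
  have hfil : (Finset.powersetCard 2 I).filter (fun S => i ∈ S ∧ j ∈ S)
      = if i ∈ I ∧ j ∈ I then ({({i, j} : Finset (Fin n))} : Finset (Finset (Fin n))) else ∅ := by
    ext S
    simp only [Finset.mem_filter, Finset.mem_powersetCard]
    constructor
    · rintro ⟨⟨hSI, hS2⟩, hi, hj⟩
      have hsub : ({i, j} : Finset (Fin n)) ⊆ S := by
        intro x hx; simp only [Finset.mem_insert, Finset.mem_singleton] at hx
        rcases hx with rfl | rfl <;> assumption
      have : S = ({i, j} : Finset (Fin n)) := by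
        apply (Finset.eq_of_subset_of_card_le hsub ?_).symm
        rw [hS2, Finset.card_pair hij]
      subst this
      simp [hSI (Finset.mem_insert_self i {j}), hSI (by simp : j ∈ ({i,j}:Finset (Fin n)))]
    · intro hS
      by_cases hIJ : i ∈ I ∧ j ∈ I
      · rw [if_pos hIJ, Finset.mem_singleton] at hS
        subst hS
        refine ⟨⟨?_, Finset.card_pair hij⟩, by simp, by simp⟩
        intro x hx; simp only [Finset.mem_insert, Finset.mem_singleton] at hx
        rcases hx with rfl | rfl
        · exact hIJ.1
        · exact hIJ.2
      · rw [if_neg hIJ] at hS; exact absurd hS (Finset.notMem_empty S)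
  rw [hfil]
  by_cases hIJ : i ∈ I ∧ j ∈ I
  · rw [if_pos hIJ]; simp [chi, hIJ.1, hIJ.2]
  · rw [if_neg hIJ]
    rcases not_and_or.mp hIJ with h' | h' <;> simp [chi, h']

lemma v_eq_sum {n : ℕ} (I : Finset (Fin n)) :
    v I = ∑ S ∈ Finset.powersetCard 2 I, v S := by
  have hsum : (∑ S ∈ Finset.powersetCard 2 I, v S)
      = Submodule.Quotient.mk (∑ S ∈ Finset.powersetCard 2 I, splitVec S) := by
    rw [← Submodule.mkQ_apply, map_sum]
    rfl
  rw [hsum, v, Submodule.Quotient.eq]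
  have key : splitVec I - (∑ S ∈ Finset.powersetCard 2 I, splitVec S)
      = phiMap n (chi I - ∑ S ∈ Finset.powersetCard 2 I, chi S) := by
    funext p
    have hij : p.val.1 ≠ p.val.2 := ne_of_lt p.prop
    have hS : ∀ S ∈ Finset.powersetCard 2 I, splitVec S p
        = chi S p.val.1 + chi S p.val.2 - 2 * (chi S p.val.1 * chi S p.val.2) :=
      fun S _ => splitVec_formula S p
    simp only [Pi.sub_apply, Finset.sum_apply, phiMap]
    rw [splitVec_formula, Finset.sum_congr rfl hS, Finset.sum_sub_distrib,
      Finset.sum_add_distrib, ← Finset.mul_sum, sum_chi_mul I hij]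
    ring
  rw [key]
  exact Submodule.subset_span ⟨_, rfl⟩

lemma v_erase_eq_zero {n : ℕ} (k : Fin n) :
    v ((Finset.univ : Finset (Fin n)).erase k) = 0 := by
  rw [v, Submodule.Quotient.mk_eq_zero]
  have key : splitVec ((Finset.univ : Finset (Fin n)).erase k)
      = phiMap n (fun i => if i = k then 1 else 0) := by
    funext p
    have hij : p.val.1 ≠ p.val.2 := ne_of_lt p.prop
    by_cases h1 : p.val.1 = k <;> by_cases h2 : p.val.2 = k <;>
      simp [splitVec, phiMap, Finset.mem_erase, h1, h2]
    · exact absurd (h1.trans h2.symm) hij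
  rw [key]
  exact Submodule.subset_span ⟨_, rfl⟩

lemma sum_basis_zero {n : ℕ} (k : Fin n) :
    ∑ S ∈ Finset.powersetCard 2 ((Finset.univ : Finset (Fin n)).erase k), v S = 0 := by
  rw [← v_eq_sum, v_erase_eq_zero]

theorem v_eq_sum_basis_elements (n : ℕ) (hn : 3 ≤ n) (k : Fin n)
    (I₀ : Finset (Fin n)) (hI₀ : I₀.card = 2) (hkI₀ : k ∉ I₀)
    (I : Finset (Fin n)) (hI1 : 1 < I.card) (hI2 : I.card < n - 1) (hk : k ∉ I) :
    (¬ I₀ ⊆ I →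
      v I = ∑ S ∈ (Finset.powersetCard 2 I).filter (fun S => k ∉ S ∧ S ≠ I₀), v S) ∧
    (I₀ ⊆ I →
      v I = -∑ S ∈ (Finset.powersetCard 2 (Finset.univ : Finset (Fin n))).filter
          (fun S => k ∉ S ∧ S ≠ I₀ ∧ ¬ S ⊆ I), v S) := by
  constructor
  · intro hnsub
    have hfil : (Finset.powersetCard 2 I).filter (fun S => k ∉ S ∧ S ≠ I₀)
        = Finset.powersetCard 2 I := by
      apply Finset.filter_true_of_mem
      intro S hS
      rw [Finset.mem_powersetCard] at hS
      refine ⟨fun hkS => hk (hS.1 hkS), fun hSe => hnsub (hSe ▸ hS.1)⟩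
    rw [hfil, ← v_eq_sum]
  · intro hsub
    have hU : ∀ S : Finset (Fin n),
        S ∈ Finset.powersetCard 2 ((Finset.univ : Finset (Fin n)).erase k)
          ↔ (S.card = 2 ∧ k ∉ S) := by
      intro S
      rw [Finset.mem_powersetCard, Finset.subset_erase]
      constructor
      · rintro ⟨⟨_, hkS⟩, hc⟩; exact ⟨hc, hkS⟩
      · rintro ⟨hc, hkS⟩; exact ⟨⟨Finset.subset_univ S, hkS⟩, hc⟩
    set U := Finset.powersetCard 2 ((Finset.univ : Finset (Fin n)).erase k) with hUdef
    have hsplit := Finset.sum_filter_add_sum_filter_not U (fun S => S ⊆ I) v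
    have h1 : U.filter (fun S => S ⊆ I) = Finset.powersetCard 2 I := by
      ext S
      rw [Finset.mem_filter, hU, Finset.mem_powersetCard]
      constructor
      · rintro ⟨⟨hc, _⟩, hSI⟩; exact ⟨hSI, hc⟩
      · rintro ⟨hSI, hc⟩; exact ⟨⟨hc, fun hkS => hk (hSI hkS)⟩, hSI⟩
    have h2 : U.filter (fun S => ¬ S ⊆ I)
        = (Finset.powersetCard 2 (Finset.univ : Finset (Fin n))).filter
            (fun S => k ∉ S ∧ S ≠ I₀ ∧ ¬ S ⊆ I) := by
      ext S
      rw [Finset.mem_filter, hU, Finset.mem_filter, Finset.mem_powersetCard]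
      constructor
      · rintro ⟨⟨hc, hkS⟩, hSI⟩
        exact ⟨⟨Finset.subset_univ S, hc⟩, hkS, fun hSe => hSI (hSe ▸ hsub), hSI⟩
      · rintro ⟨⟨_, hc⟩, hkS, _, hSI⟩
        exact ⟨⟨hc, hkS⟩, hSI⟩
    rw [h1, h2] at hsplit
    have hz : ∑ S ∈ U, v S = 0 := sum_basis_zero k
    rw [hz, ← v_eq_sum] at hsplit
    exact eq_neg_of_add_eq_zero_left hsplit

end Stmt6
end

section
/- The linear map f : ℝ^{C(n-1,2)}/L → ℝ^{C(n,2)}/Im(φ_n), induced by sending (a_{i,j})_{i<j≤n-1} to (b_{i,j})_{i<j≤n} with b_{i,j} = 0 if n ∈ {i,j} and b_{i,j} = 2a_{i,j} otherwise, is a well-defined linear isomorphism, where L = ℝ·(1,…,1) ⊆ ℝ^{C(n-1,2)} and φ_n : ℝ^n → ℝ^{C(n,2)}, x ↦ (x_i + x_j)_{i<j}. -/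
/-!
STATEMENT 7: The linear map f : ℝ^{C(n-1,2)}/L → ℝ^{C(n,2)}/Im(φ_n), induced by sending
(a_{i,j})_{i<j≤n-1} to (b_{i,j})_{i<j≤n} with b_{i,j} = 0 if n ∈ {i,j} and b_{i,j} = 2a_{i,j}
otherwise, is a well-defined linear isomorphism, where L = ℝ·(1,…,1) ⊆ ℝ^{C(n-1,2)} and
φ_n : ℝ^n → ℝ^{C(n,2)}, x ↦ (x_i + x_j)_{i<j}.

Here we write n = m + 1, so the source is indexed by pairs in [m] and the target by pairs
in [m+1] (whose last element plays the role of the special index n).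
-/

namespace Stmt7

open scoped Classical

/-- Index type for the coordinates of `ℝ^{C(n,2)}`: ordered pairs i < j in [n]. -/
def Pair (n : ℕ) := {p : Fin n × Fin n // p.1 < p.2}

/-- The map φ_n : ℝ^n → ℝ^{C(n,2)}, x ↦ (x_i + x_j)_{i<j}. -/
def phiMap (n : ℕ) (x : Fin n → ℝ) : Pair n → ℝ := fun p => x p.val.1 + x p.val.2

/-- The subspace Im(φ_n) of ℝ^{C(n,2)}. -/
noncomputable def phiIm (n : ℕ) : Submodule ℝ (Pair n → ℝ) :=
  Submodule.span ℝ (Set.range (phiMap n))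

/-- The line L = ℝ·(1,…,1). -/
noncomputable def LDiag (m : ℕ) : Submodule ℝ (Pair m → ℝ) :=
  Submodule.span ℝ {fun _ => (1 : ℝ)}

/-- A pair in [m+1] avoiding the last element, viewed as a pair in [m]. -/
def down {m : ℕ} (q : Pair (m + 1)) (h : q.val.2 ≠ Fin.last m) : Pair m :=
  ⟨(⟨q.val.1.val, by
        have h2 : q.val.2.val < m :=
          lt_of_le_of_ne (Nat.lt_succ_iff.mp q.val.2.isLt) fun hc => h (Fin.ext hc)
        exact lt_trans (Fin.lt_def.mp q.prop) h2⟩,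
      ⟨q.val.2.val,
        lt_of_le_of_ne (Nat.lt_succ_iff.mp q.val.2.isLt) fun hc => h (Fin.ext hc)⟩),
    q.prop⟩

/-- The map a ↦ b on coordinate vectors: b_{i,j} = 0 if the last index occurs in {i,j},
and b_{i,j} = 2·a_{i,j} otherwise. -/
noncomputable def gmap (m : ℕ) (a : Pair m → ℝ) : Pair (m + 1) → ℝ := fun q =>
  if h : q.val.2 = Fin.last m then 0 else 2 * a (down q h)

/-- A pair in [m], viewed as a pair in [m+1]. -/
def up {m : ℕ} (p : Pair m) : Pair (m + 1) :=
  ⟨(p.val.1.castSucc, p.val.2.castSucc), Fin.castSucc_lt_castSucc_iff.mpr p.prop⟩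

/-- The pair (i, last). -/
def pairLast {m : ℕ} (i : Fin m) : Pair (m + 1) :=
  ⟨(i.castSucc, Fin.last m), Fin.castSucc_lt_last i⟩

lemma up_snd_ne_last {m : ℕ} (p : Pair m) : (up p).val.2 ≠ Fin.last m := by
  exact Fin.ne_of_lt (Fin.castSucc_lt_last _)

lemma down_up {m : ℕ} (p : Pair m) (h : (up p).val.2 ≠ Fin.last m) :
    down (up p) h = p := rfl

/-- φ as a linear map. -/
noncomputable def phiL (n : ℕ) : (Fin n → ℝ) →ₗ[ℝ] (Pair n → ℝ) where
  toFun := phiMap n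
  map_add' x y := funext fun p => by simp only [phiMap, Pi.add_apply]; ring
  map_smul' c x := funext fun p => by
    simp only [phiMap, Pi.smul_apply, smul_eq_mul, RingHom.id_apply]; ring

lemma phiIm_eq (n : ℕ) : phiIm n = LinearMap.range (phiL n) := by
  have : Set.range (phiMap n) = (LinearMap.range (phiL n) : Set (Pair n → ℝ)) := by
    rw [LinearMap.coe_range]; rfl
  rw [phiIm, this, Submodule.span_eq]

/-- gmap as a linear map. -/
noncomputable def Gl (m : ℕ) : (Pair m → ℝ) →ₗ[ℝ] (Pair (m + 1) → ℝ) where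
  toFun := gmap m
  map_add' a b := funext fun q => by
    by_cases h : q.val.2 = Fin.last m <;> simp [gmap, h] <;> ring
  map_smul' c a := funext fun q => by
    by_cases h : q.val.2 = Fin.last m <;> simp [gmap, h] <;> ring

lemma gmap_ones_mem (m : ℕ) : gmap m (fun _ => (1 : ℝ)) ∈ phiIm (m + 1) := by
  rw [phiIm_eq]
  refine ⟨fun i => if i = Fin.last m then -1 else 1, funext fun q => ?_⟩
  by_cases h : q.val.2 = Fin.last m
  · have h1 : q.val.1 ≠ Fin.last m := by
      intro hc; exact absurd (hc ▸ h ▸ q.prop) (lt_irrefl _)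
    show phiMap (m + 1) (fun i => if i = Fin.last m then -1 else 1) q
        = gmap m (fun _ => (1 : ℝ)) q
    simp [phiMap, gmap, h, h1]
  · have h1 : q.val.1 ≠ Fin.last m := by
      intro hc
      have := q.prop
      rw [hc] at this
      exact h (le_antisymm (Fin.le_last _) this.le)
    show phiMap (m + 1) (fun i => if i = Fin.last m then -1 else 1) q
        = gmap m (fun _ => (1 : ℝ)) q
    simp [phiMap, gmap, h, h1]
    norm_num

theorem induced_map_is_linear_iso (m : ℕ) (hm : 2 ≤ m) :
    ∃ f : ((Pair m → ℝ) ⧸ LDiag m) →ₗ[ℝ] ((Pair (m + 1) → ℝ) ⧸ phiIm (m + 1)),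
      Function.Bijective f ∧
      ∀ a : Pair m → ℝ,
        f (Submodule.Quotient.mk a) = Submodule.Quotient.mk (gmap m a) := by
  set F : (Pair m → ℝ) →ₗ[ℝ] ((Pair (m + 1) → ℝ) ⧸ phiIm (m + 1)) :=
    (phiIm (m + 1)).mkQ.comp (Gl m) with hFdef
  have hker : ∀ a : Pair m → ℝ, F a = 0 ↔ gmap m a ∈ phiIm (m + 1) := by
    intro a
    simp [hFdef, Submodule.Quotient.mk_eq_zero]
    rfl
  have hL : LDiag m ≤ LinearMap.ker F := by
    rw [LDiag, Submodule.span_le, Set.singleton_subset_iff]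
    rw [SetLike.mem_coe, LinearMap.mem_ker, hker]
    exact gmap_ones_mem m
  refine ⟨(LDiag m).liftQ F hL, ⟨?_, ?_⟩, fun a => ?_⟩
  · -- injective
    rw [← LinearMap.ker_eq_bot]
    rw [Submodule.ker_liftQ_eq_bot]
    intro a ha
    rw [LinearMap.mem_ker, hker, phiIm_eq] at ha
    obtain ⟨x, hx⟩ := ha
    have hx' : ∀ q, phiMap (m + 1) x q = gmap m a q := fun q => congrFun hx q
    set c : ℝ := -x (Fin.last m) with hc
    have hx1 : ∀ i : Fin m, x i.castSucc = c := by
      intro i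
      have := hx' (pairLast i)
      simp [phiMap, gmap, pairLast] at this
      linarith [this]
    have ha' : ∀ p : Pair m, a p = c := by
      intro p
      have := hx' (up p)
      rw [gmap] at this
      rw [dif_neg (up_snd_ne_last p), down_up] at this
      have e1 := hx1 p.val.1
      have e2 := hx1 p.val.2
      simp only [phiMap, up] at this
      rw [e1, e2] at this
      linarith
    rw [LDiag, Submodule.mem_span_singleton]
    exact ⟨c, funext fun p => by simp [ha' p]⟩
  · -- surjective
    intro y
    obtain ⟨b, rfl⟩ := Submodule.Quotient.mk_surjective _ y
    set x : Fin (m + 1) → ℝ := fun i =>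
      if h : i < Fin.last m then b ⟨(i, Fin.last m), h⟩ else 0 with hxdef
    set a : Pair m → ℝ := fun p =>
      (b (up p) - b (pairLast p.val.1) - b (pairLast p.val.2)) / 2 with hadef
    refine ⟨Submodule.Quotient.mk a, ?_⟩
    rw [Submodule.liftQ_apply]
    show Submodule.Quotient.mk (gmap m a) = Submodule.Quotient.mk b
    rw [Submodule.Quotient.eq]
    rw [phiIm_eq]
    refine ⟨-x, funext fun q => ?_⟩
    show -(x q.val.1) + -(x q.val.2) = gmap m a q - b q
    by_cases h : q.val.2 = Fin.last m
    · have h1 : q.val.1 < Fin.last m := h ▸ q.prop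
      have hq : q = ⟨(q.val.1, Fin.last m), h1⟩ := Subtype.ext (Prod.ext rfl h)
      rw [gmap, dif_pos h, hxdef]
      simp only [dif_pos h1]
      have h2 : ¬ q.val.2 < Fin.last m := by rw [h]; exact lt_irrefl _
      simp only [dif_neg h2]
      have hb : b q = b ⟨(q.val.1, Fin.last m), h1⟩ := by
        rw [← hq]
      rw [hb]; ring
    · have h2 : q.val.2 < Fin.last m :=
        lt_of_le_of_ne (Fin.le_last _) h
      have h1 : q.val.1 < Fin.last m := lt_trans q.prop h2
      rw [gmap, dif_neg h, hxdef]
      simp only [dif_pos h1, dif_pos h2]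
      rw [hadef]
      have e1 : up (down q h) = q := by
        apply Subtype.ext
        apply Prod.ext <;> apply Fin.ext <;> rfl
      have e2 : pairLast (down q h).val.1 = ⟨(q.val.1, Fin.last m), h1⟩ := by
        apply Subtype.ext
        apply Prod.ext
        · apply Fin.ext; rfl
        · rfl
      have e3 : pairLast (down q h).val.2 = ⟨(q.val.2, Fin.last m), h2⟩ := by
        apply Subtype.ext
        apply Prod.ext
        · apply Fin.ext; rfl
        · rfl
      simp only [e1, e2, e3]
      ring
  · exact Submodule.liftQ_apply _ _ _

end Stmt7
end

section
/- Let g : X → Y be a surjective linear map of finite-dimensional real vector spaces with dim X = dim Y + 1, let σ ⊆ X be a polyhedron, and let b, b' ∈ g(σ) with the fibre C_{b'} := g^{-1}(b') ∩ σ unbounded, i.e. containing a ray {x + αv : α ≥ 0} ⊆ σ. If the fibre C_b := g^{-1}(b) ∩ σ contains two distinct points p, q, then C_{b_λ} := g^{-1}(b + λ(b'−b)) ∩ σ is unbounded for every λ ∈ (0,1]; in particular, by convexity of σ, ((1−λ)p + λ(q + αv)) ∈ C_{b_λ} for all α ≥ 0. -/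
/-!
STATEMENT 11: Let g : X → Y be a surjective linear map of finite-dimensional real vector
spaces with dim X = dim Y + 1, let σ ⊆ X be a polyhedron, and let b, b' ∈ g(σ) with the
fibre C_{b'} := g⁻¹(b') ∩ σ unbounded, i.e. containing a ray {x + αv : α ≥ 0} ⊆ σ.  If the
fibre C_b := g⁻¹(b) ∩ σ contains two distinct points p, q, then
C_{b_λ} := g⁻¹(b + λ(b'−b)) ∩ σ is unbounded for every λ ∈ (0,1]; in particular, by
convexity of σ, the points (1−λ)p + λ(x + αv) lie in C_{b_λ} for all α ≥ 0.
-/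

namespace Stmt11

theorem fibres_unbounded_on_segment {X Y : Type*}
    [AddCommGroup X] [Module ℝ X] [FiniteDimensional ℝ X]
    [AddCommGroup Y] [Module ℝ Y] [FiniteDimensional ℝ Y]
    (g : X →ₗ[ℝ] Y) (hsurj : Function.Surjective g)
    (hdim : Module.finrank ℝ X = Module.finrank ℝ Y + 1)
    (σ : Set X)
    (hpoly : ∃ (ι : Type) (_ : Finite ι) (f : ι → X →ₗ[ℝ] ℝ) (c : ι → ℝ),
      σ = {x : X | ∀ i, f i x ≤ c i})
    (b b' : Y) (hb : b ∈ g '' σ) (hb' : b' ∈ g '' σ)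
    (x v : X) (hv : v ≠ 0)
    (hray : ∀ α : ℝ, 0 ≤ α → x + α • v ∈ σ ∧ g (x + α • v) = b')
    (p q : X) (hp : p ∈ σ) (hgp : g p = b) (hq : q ∈ σ) (hgq : g q = b) (hpq : p ≠ q) :
    ∀ lam : ℝ, 0 < lam → lam ≤ 1 →
      ((∃ (y w : X), w ≠ 0 ∧ ∀ α : ℝ, 0 ≤ α →
          y + α • w ∈ σ ∧ g (y + α • w) = b + lam • (b' - b)) ∧
        ∀ α : ℝ, 0 ≤ α →
          ((1 - lam) • p + lam • (x + α • v)) ∈ σ ∧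
          g ((1 - lam) • p + lam • (x + α • v)) = b + lam • (b' - b)) := by
  -- σ is convex
  obtain ⟨ι, _, f, c, rfl⟩ := hpoly
  have hconv : ∀ a b : X, a ∈ {x : X | ∀ i, f i x ≤ c i} →
      b ∈ {x : X | ∀ i, f i x ≤ c i} → ∀ t : ℝ, 0 ≤ t → t ≤ 1 →
      (1 - t) • a + t • b ∈ {x : X | ∀ i, f i x ≤ c i} := by
    intro a b ha hb t ht0 ht1 i
    have := ha i
    have := hb i
    simp only [map_add, map_smul, smul_eq_mul]
    nlinarith
  intro lam hl0 hl1
  have key : ∀ α : ℝ, 0 ≤ α →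
      ((1 - lam) • p + lam • (x + α • v)) ∈ {x : X | ∀ i, f i x ≤ c i} ∧
      g ((1 - lam) • p + lam • (x + α • v)) = b + lam • (b' - b) := by
    intro α hα
    refine ⟨hconv _ _ hp (hray α hα).1 lam hl0.le hl1, ?_⟩
    have := (hray α hα).2
    simp only [map_add, map_smul, hgp, this]
    module
  refine ⟨⟨(1 - lam) • p + lam • x, lam • v, ?_, ?_⟩, key⟩
  · exact smul_ne_zero (ne_of_gt hl0) hv
  · intro α hα
    have h := key α hα
    have heq : (1 - lam) • p + lam • x + α • lam • v
        = (1 - lam) • p + lam • (x + α • v) := by module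
    rw [heq]
    exact h

end Stmt11
end
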